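/- Let L be a finite nonempty index set, for each ℓ ∈ L let q_ℓ > 0 and δ_ℓ ≥ 0 with M = max_{ℓ∈L} δ_ℓ/q_ℓ > 0, and let σ ≥ 0. Then there exists a unique ζ in the interval [1 − M, 1] such that Σ_{ℓ∈L} P_{[0,δ_ℓ]}(q_ℓ·(1−ζ)) = min(σ, Σ_{ℓ∈L} δ_ℓ). -/

import Mathlib

/-! `Ξ` is continuous and antitone; it vanishes at `ζ = 1`, equals `∑ δ` at `ζ = 1 - M`, and is
strictly decreasing on `[1 - M, 1]` because the term of an index `ℓ₀` attaining `M` is unclamped,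
hence affine with slope `-q ℓ₀ < 0`, there. The intermediate value theorem then gives existence
and strict monotonicity gives uniqueness. -/

/-- The clamp (projection) of `x` onto the interval `[a, b]`. -/
noncomputable def clamp (a b x : ℝ) : ℝ := max a (min b x)

open Set Finset

theorem StrictAntiOn.existsUnique_eq_of_continuousOn
    {α β : Type*} [ConditionallyCompleteLinearOrder α] [TopologicalSpace α] [OrderTopology α]
    [DenselyOrdered α] [LinearOrder β] [TopologicalSpace β] [OrderClosedTopology β]
    {f : α → β} {a b : α} {t : β} (hab : a ≤ b) (hf : ContinuousOn f (Icc a b))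
    (hanti : StrictAntiOn f (Icc a b)) (ht : t ∈ Icc (f b) (f a)) :
    ∃! x, x ∈ Icc a b ∧ f x = t := by
  obtain ⟨x, hx, hfx⟩ := intermediate_value_Icc' hab hf ht
  exact ⟨x, ⟨hx, hfx⟩, fun y ⟨hy, hfy⟩ => hanti.injOn hy hx (hfy.trans hfx.symm)⟩

theorem monotone_clamp (a b : ℝ) : Monotone (clamp a b) :=
  fun _ _ h => max_le_max le_rfl (min_le_min le_rfl h)

theorem continuous_clamp (a b : ℝ) : Continuous (clamp a b) := by
  unfold clamp
  fun_prop

theorem clamp_of_mem_Icc {a b x : ℝ} (hx : x ∈ Icc a b) : clamp a b x = x := by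
  rw [clamp, min_eq_right hx.2, max_eq_right hx.1]

theorem clamp_of_right_le {a b x : ℝ} (hab : a ≤ b) (hx : b ≤ x) : clamp a b x = b := by
  rw [clamp, min_eq_left hx, max_eq_right hab]

section clampSum

variable {L : Type*} [Fintype L] (q δ : L → ℝ)

/-- The function `Ξ` of the statement. -/
noncomputable def clampSum (ζ : ℝ) : ℝ := ∑ ℓ, clamp 0 (δ ℓ) (q ℓ * (1 - ζ))

theorem continuous_clampSum : Continuous (clampSum q δ) :=
  continuous_finsetSum _ fun ℓ _ => (continuous_clamp 0 (δ ℓ)).comp (by fun_prop)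

variable {q δ}

theorem clampSum_one (hδ : ∀ ℓ, 0 ≤ δ ℓ) : clampSum q δ 1 = 0 :=
  Finset.sum_eq_zero fun ℓ _ => by
    rw [sub_self, mul_zero]
    exact clamp_of_mem_Icc (left_mem_Icc.2 (hδ ℓ))

theorem clampSum_one_sub_of_forall_div_le (hq : ∀ ℓ, 0 < q ℓ) (hδ : ∀ ℓ, 0 ≤ δ ℓ) {m : ℝ}
    (hm : ∀ ℓ, δ ℓ / q ℓ ≤ m) : clampSum q δ (1 - m) = ∑ ℓ, δ ℓ :=
  Finset.sum_congr rfl fun ℓ _ => by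
    rw [sub_sub_cancel]
    exact clamp_of_right_le (hδ ℓ) ((div_le_iff₀' (hq ℓ)).1 (hm ℓ))

theorem clampSum_strictAntiOn (hq : ∀ ℓ, 0 ≤ q ℓ) {ℓ₀ : L} (hq₀ : 0 < q ℓ₀) :
    StrictAntiOn (clampSum q δ) (Icc (1 - δ ℓ₀ / q ℓ₀) 1) := by
  have unclamped : ∀ z ∈ Icc (1 - δ ℓ₀ / q ℓ₀) 1,
      clamp 0 (δ ℓ₀) (q ℓ₀ * (1 - z)) = q ℓ₀ * (1 - z) := fun z hz =>
    clamp_of_mem_Icc ⟨mul_nonneg hq₀.le (sub_nonneg.2 hz.2),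
      (le_div_iff₀' hq₀).1 (by linarith [hz.1])⟩
  intro x hx y hy hxy
  refine Finset.sum_lt_sum (fun ℓ _ => monotone_clamp _ _ ?_) ⟨ℓ₀, mem_univ _, ?_⟩
  · exact mul_le_mul_of_nonneg_left (by linarith) (hq ℓ)
  · rw [unclamped x hx, unclamped y hy]
    exact mul_lt_mul_of_pos_left (by linarith) hq₀

end clampSum

theorem stmt2_general {L : Type*} [Fintype L] [Nonempty L]
    (q δ : L → ℝ) (hq : ∀ ℓ, 0 < q ℓ) (hδ : ∀ ℓ, 0 ≤ δ ℓ)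
    (σ : ℝ) (hσ : 0 ≤ σ) :
    ∃! ζ : ℝ,
      ζ ∈ Set.Icc (1 - Finset.univ.sup' Finset.univ_nonempty (fun ℓ => δ ℓ / q ℓ)) 1 ∧
      (∑ ℓ, clamp 0 (δ ℓ) (q ℓ * (1 - ζ))) = min σ (∑ ℓ, δ ℓ) := by
  obtain ⟨ℓ₀, -, hM⟩ := exists_mem_eq_sup' univ_nonempty fun ℓ => δ ℓ / q ℓ
  have le_M : ∀ ℓ, δ ℓ / q ℓ ≤ δ ℓ₀ / q ℓ₀ := fun ℓ =>
    hM ▸ le_sup' (fun ℓ => δ ℓ / q ℓ) (mem_univ ℓ)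
  rw [hM]
  refine StrictAntiOn.existsUnique_eq_of_continuousOn (f := clampSum q δ)
    (sub_le_self _ (div_nonneg (hδ ℓ₀) (hq ℓ₀).le)) (continuous_clampSum q δ).continuousOn
    (clampSum_strictAntiOn (fun ℓ => (hq ℓ).le) (hq ℓ₀)) ⟨?_, ?_⟩
  · rw [clampSum_one hδ]
    exact le_min hσ (sum_nonneg fun ℓ _ => hδ ℓ)
  · rw [clampSum_one_sub_of_forall_div_le hq hδ le_M]
    exact min_le_right _ _

/-- If `M = max_ℓ δ ℓ / q ℓ > 0` and `σ ≥ 0`, then there is a unique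
`ζ ∈ [1 - M, 1]` with `∑ ℓ, P_{[0, δ ℓ]} (q ℓ * (1 - ζ)) = min σ (∑ ℓ, δ ℓ)`. -/
theorem stmt2 {L : Type*} [Fintype L] [Nonempty L]
    (q δ : L → ℝ) (hq : ∀ ℓ, 0 < q ℓ) (hδ : ∀ ℓ, 0 ≤ δ ℓ)
    (hM : 0 < Finset.univ.sup' Finset.univ_nonempty (fun ℓ => δ ℓ / q ℓ))
    (σ : ℝ) (hσ : 0 ≤ σ) :
    ∃! ζ : ℝ,
      ζ ∈ Set.Icc (1 - Finset.univ.sup' Finset.univ_nonempty (fun ℓ => δ ℓ / q ℓ)) 1 ∧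
      (∑ ℓ, clamp 0 (δ ℓ) (q ℓ * (1 - ζ))) = min σ (∑ ℓ, δ ℓ) :=
  stmt2_general q δ hq hδ σ hσ
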